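/- Let U be an ultrafilter on D_0 = D(ℝ^d) containing every directing set D_n, and let *ℝ = Germ U ℝ be the field of germs of nets D_0 → ℝ modulo U. Then the germ ρ of the net φ ↦ R_φ satisfies 0 < ρ < r for every positive real number r (embedded as a constant germ); in particular ρ is a positive infinitesimal not equal to any real number, so the constant embedding ℝ → *ℝ is not surjective and ℝ is a proper subfield of *ℝ. -/

import Mathlib

/-!
Every nonzero test function is nonzero at some point `x ≠ 0` (its nonvanishing set is open and
`ℝ^d`, `d > 0`, has no isolated points), so `0 < ‖x‖ ≤ R_φ`; and `R_φ = 1` for `φ = 0`.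
On the other hand `R_φ ≤ 1/n` on `D_n ∈ U`. Hence `0 < ρ < r` in `*ℝ`, and a positive germ below every positive
constant is itself no constant.
-/

open MeasureTheory Filter

noncomputable section

abbrev Rd (d : ℕ) := EuclideanSpace ℝ (Fin d)

noncomputable def pderivI (d : ℕ) (i : Fin d) (f : Rd d → ℂ) : Rd d → ℂ :=
  fun x => fderiv ℝ f x (EuclideanSpace.single i (1 : ℝ))

noncomputable def multiDeriv (d : ℕ) (α : Fin d → ℕ) (f : Rd d → ℂ) : Rd d → ℂ :=
  ((List.ofFn fun i : Fin d => (pderivI d i)^[α i]).foldr (· ∘ ·) id) f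

open Classical in
noncomputable def radSupp (d : ℕ) (φ : Rd d → ℂ) : ℝ :=
  if φ = 0 then 1 else sSup {r : ℝ | ∃ x, φ x ≠ 0 ∧ r = ‖x‖}

def TestFun (d : ℕ) := {φ : Rd d → ℂ // ContDiff ℝ (⊤ : ℕ∞) φ ∧ HasCompactSupport φ}

def directingSet (d n : ℕ) : Set (TestFun d) :=
  {φ | (∀ x, (φ.1 x).im = 0) ∧
       (∀ x, φ.1 (-x) = φ.1 x) ∧
       radSupp d φ.1 ≤ 1 / n ∧
       (∫ x, φ.1 x) = 1 ∧
       (∀ α : Fin d → ℕ, 1 ≤ ∑ i, α i → ∑ i, α i ≤ n →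
          (∫ x, (∏ i, (x i : ℂ) ^ α i) * φ.1 x) = 0) ∧
       (∫ x, ‖φ.1 x‖) ≤ 1 + 1 / n ∧
       (∀ α : Fin d → ℕ, ∑ i, α i ≤ n → ∀ x,
          ‖multiDeriv d α φ.1 x‖ ≤ radSupp d φ.1 ^ (-(2 * ((∑ i, α i) + d) : ℤ)))}

end

open Topology

theorem Continuous.exists_ne_and_apply_ne_zero {X M : Type*} [TopologicalSpace X]
    [TopologicalSpace M] [Zero M] [T1Space M] {f : X → M} (hf : Continuous f) (hf₀ : f ≠ 0)
    (x₀ : X) [NeBot (𝓝[≠] x₀)] : ∃ x, x ≠ x₀ ∧ f x ≠ 0 := by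
  by_contra! h
  obtain ⟨y, hy⟩ := Function.ne_iff.1 hf₀
  have hy₀ : y = x₀ := by_contra fun hne => hy (h y hne)
  have hsupport : Function.support f = {x₀} :=
    Set.eq_singleton_iff_unique_mem.2 ⟨hy₀ ▸ hy, fun x hx => by_contra fun hne => hx (h x hne)⟩
  exact not_isOpen_singleton x₀ (hsupport ▸ isOpen_ne.preimage hf)

theorem Filter.Germ.ne_const_of_pos_of_lt_const {α β : Type*} [Zero β] [LinearOrder β]
    {U : Ultrafilter α} {ρ : (U : Filter α).Germ β} (hpos : 0 < ρ)
    (hlt : ∀ r : β, 0 < r → ρ < ↑r) (r : β) : ρ ≠ ↑r := by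
  rcases lt_or_ge 0 r with hr | hr
  · exact (hlt r hr).ne
  · exact ((Germ.const_le hr).trans_lt hpos).ne'

section RadiusOfSupport

variable {d : ℕ} {φ : Rd d → ℂ}

theorem norm_le_radSupp (hφ : HasCompactSupport φ) {x : Rd d} (hx : φ x ≠ 0) :
    ‖x‖ ≤ radSupp d φ := by
  have hφ₀ : φ ≠ 0 := fun h => hx (congrFun h x)
  have hbdd : BddAbove {r : ℝ | ∃ x, φ x ≠ 0 ∧ r = ‖x‖} :=
    (hφ.isCompact.image continuous_norm).bddAbove.mono <|
      by rintro _ ⟨y, hy, rfl⟩; exact ⟨y, subset_tsupport φ hy, rfl⟩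
  rw [radSupp, if_neg hφ₀]
  exact le_csSup hbdd ⟨x, hx, rfl⟩

theorem radSupp_pos (hd : 0 < d) (hφ : Continuous φ) (hφc : HasCompactSupport φ) :
    0 < radSupp d φ := by
  by_cases hφ₀ : φ = 0
  · simp [radSupp, hφ₀]
  have : Nonempty (Fin d) := ⟨⟨0, hd⟩⟩
  obtain ⟨x, hx₀, hx⟩ := hφ.exists_ne_and_apply_ne_zero hφ₀ 0
  exact (norm_pos_iff.2 hx₀).trans_le (norm_le_radSupp hφc hx)

theorem eventually_radSupp_lt {l : Filter (TestFun d)}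
    (hl : ∀ n : ℕ, 1 ≤ n → directingSet d n ∈ l) {r : ℝ} (hr : 0 < r) :
    ∀ᶠ φ in l, radSupp d φ.1 < r := by
  obtain ⟨n, hn⟩ := exists_nat_one_div_lt hr
  filter_upwards [hl (n + 1) (Nat.le_add_left 1 n)] with φ hφ
  calc radSupp d φ.1 ≤ 1 / ((n + 1 : ℕ) : ℝ) := hφ.2.2.1
    _ < r := by exact_mod_cast hn

end RadiusOfSupport

/-- in `*ℝ = Germ U ℝ` (germs of `D_0`-nets modulo an ultrafilter `U`
containing every directing set), the germ `ρ` of the net `φ ↦ R_φ` satisfies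
`0 < ρ < r` for every real `r > 0`; in particular `ρ` equals no real number, so the
constant embedding `ℝ → *ℝ` is not surjective and `ℝ` is a proper subfield of `*ℝ`. -/
theorem radSupp_germ_positive_infinitesimal
    (d : ℕ) (hd : 0 < d) (U : Ultrafilter (TestFun d))
    (hU : ∀ n : ℕ, 1 ≤ n → directingSet d n ∈ U) :
    (0 < (↑(fun φ : TestFun d => radSupp d φ.1) : Filter.Germ (U : Filter (TestFun d)) ℝ)) ∧
    (∀ r : ℝ, 0 < r →
      (↑(fun φ : TestFun d => radSupp d φ.1) : Filter.Germ (U : Filter (TestFun d)) ℝ)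
        < (↑r : Filter.Germ (U : Filter (TestFun d)) ℝ)) ∧
    (∀ r : ℝ,
      (↑(fun φ : TestFun d => radSupp d φ.1) : Filter.Germ (U : Filter (TestFun d)) ℝ)
        ≠ (↑r : Filter.Germ (U : Filter (TestFun d)) ℝ)) ∧
    ¬ Function.Surjective
        (fun r : ℝ => (↑r : Filter.Germ (U : Filter (TestFun d)) ℝ)) := by
  have hpos : 0 < (↑(fun φ : TestFun d => radSupp d φ.1) : (U : Filter (TestFun d)).Germ ℝ) :=
    Germ.coe_pos.2 <| .of_forall fun φ => radSupp_pos hd φ.2.1.continuous φ.2.2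
  have hlt : ∀ r : ℝ, 0 < r →
      (↑(fun φ : TestFun d => radSupp d φ.1) : (U : Filter (TestFun d)).Germ ℝ) < ↑r :=
    fun r hr => Germ.coe_lt.2 (eventually_radSupp_lt hU hr)
  have hne := Germ.ne_const_of_pos_of_lt_const hpos hlt
  refine ⟨hpos, hlt, hne, fun hsurj => ?_⟩
  obtain ⟨r, hr⟩ := hsurj (↑(fun φ : TestFun d => radSupp d φ.1))
  exact hne r hr.symm
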